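/- arXiv:2409.08427 — 4 statements merged into one kernel-verified Lean document; each statement's English description precedes it below -/
import Mathlib

section
/- Dually, let L be a diamond lattice of rank d+2 and let G be an element of corank r (rank d+2−r). Then for all k with r ≤ k+1 ≤ d+1, the lower interval [0̂, G] contains at least C(d−r+2, k+1−r) elements of corank k+1. -/
/-!
Induct on the rank `m` of `G` and fix a coatom `c ⋖ G`. Elements of corank `j + 1` in `[⊥, G]`
lying below `c` have corank `j` in `[⊥, c]`: there are at least `C(m - 1, j)` of them. Each
`z ≤ c` of corank `j + 1` in `[⊥, c]` is covered by some `x ≤ G` with `x ≰ c`, and then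
`z = x ⊓ c`; this gives at least `C(m - 1, j + 1)` elements not below `c`, and Pascal's rule
closes the induction. Such an `x` exists by downward induction on `z`: if `z ⋖ u ≤ c` and
`u ⋖ x ≰ c`, the diamond `[z, x]` has a second middle element `w`, and `w ≰ c` since otherwise
`x = u ⊔ w ≤ c`.
-/

open Set

section Rank

variable {α : Type*} [PartialOrder α] {rk : α → ℕ}

theorem StrictMono.covBy_of_eq_add_one (hrk : StrictMono rk) {a b : α} (hab : a < b)
    (h : rk b = rk a + 1) : a ⋖ b :=
  ⟨hab, fun c hac hcb => by have := hrk hac; have := hrk hcb; omega⟩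

theorem strictMono_of_covBy_eq_add_one [Finite α] (hcov : ∀ a b : α, a ⋖ b → rk b = rk a + 1) :
    StrictMono rk := by
  classical
  have := Fintype.ofFinite α
  let _ := Fintype.toLocallyFiniteOrder (α := α)
  exact (strictMono_iff_forall_covBy rk).2 fun a b h => by rw [hcov a b h]; exact Nat.lt_succ_self _

theorem exists_ne_covBy_covBy_of_ncard_Icc [Finite α]
    (hcov : ∀ a b : α, a ⋖ b → rk b = rk a + 1)
    (hdiamond : ∀ a b : α, a ≤ b → rk b = rk a + 2 → (Icc a b).ncard = 4)
    {y c x : α} (hyc : y ⋖ c) (hcx : c ⋖ x) : ∃ w ≠ c, y ⋖ w ∧ w ⋖ x := by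
  have hrc := hcov y c hyc
  have hrx := hcov c x hcx
  have h4 := hdiamond y x (hyc.le.trans hcx.le) (by omega)
  have h3 : ({y, c, x} : Set α).ncard < (Icc y x).ncard := by
    have := (ncard_insert_le y {c, x}).trans (Nat.add_le_add_right (ncard_insert_le c {x}) 1)
    rw [ncard_singleton] at this
    omega
  obtain ⟨w, ⟨hyw, hwx⟩, hw⟩ := exists_mem_notMem_of_ncard_lt_ncard h3
  simp only [mem_insert_iff, mem_singleton_iff, not_or] at hw
  obtain ⟨hwy, hwc, hwx'⟩ := hw
  have hrk := strictMono_of_covBy_eq_add_one hcov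
  have hyw := lt_of_le_of_ne hyw (Ne.symm hwy)
  have hwx := lt_of_le_of_ne hwx hwx'
  have := hrk hyw
  have := hrk hwx
  exact ⟨w, hwc, hrk.covBy_of_eq_add_one hyw (by omega), hrk.covBy_of_eq_add_one hwx (by omega)⟩

end Rank

section Diamond

variable {α : Type*} [Lattice α] [Finite α]

theorem exists_covBy_le_not_le_of_le_of_covBy
    (hdiam : ∀ ⦃y c x : α⦄, y ⋖ c → c ⋖ x → ∃ w ≠ c, y ⋖ w ∧ w ⋖ x)
    {z c G : α} (hzc : z ≤ c) (hcG : c ⋖ G) : ∃ x, z ⋖ x ∧ x ≤ G ∧ ¬ x ≤ c := by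
  induction z using WellFoundedGT.induction with
  | _ z ih =>
  rcases hzc.lt_or_eq with hzc | rfl
  · obtain ⟨u, hzu, huc⟩ := exists_covBy_le_of_lt hzc
    obtain ⟨x, hux, hxG, hxc⟩ := ih u hzu.lt huc
    obtain ⟨w, hwu, hzw, hwx⟩ := hdiam hzu hux
    refine ⟨w, hzw, hwx.le.trans hxG, fun hwc => hxc ?_⟩
    have hsup : u ⊔ w = x := by
      refine (hux.eq_or_eq le_sup_left (sup_le hux.le hwx.le)).resolve_left fun h => hwu ?_
      exact (hzu.eq_or_eq hzw.le (h ▸ le_sup_right)).resolve_left hzw.lt.ne'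
    exact hsup ▸ sup_le huc hwc
  · exact ⟨G, hcG, le_rfl, hcG.lt.not_ge⟩

theorem choose_rank_le_ncard_le_rank_add_eq [OrderBot α] {rk : α → ℕ} (hrk0 : rk ⊥ = 0)
    (hcov : ∀ a b : α, a ⋖ b → rk b = rk a + 1)
    (hdiam : ∀ ⦃y c x : α⦄, y ⋖ c → c ⋖ x → ∃ w ≠ c, y ⋖ w ∧ w ⋖ x) (G : α) (j : ℕ) :
    (rk G).choose j ≤ {x | x ≤ G ∧ rk x + j = rk G}.ncard := by
  have hself : ∀ G : α, (rk G).choose 0 ≤ {x | x ≤ G ∧ rk x + 0 = rk G}.ncard := fun G => by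
    rw [Nat.choose_zero_right]
    exact (ncard_pos (toFinite _)).2 ⟨G, le_rfl, rfl⟩
  obtain ⟨m, hm⟩ : ∃ m, rk G = m := ⟨_, rfl⟩
  induction m generalizing G j with
  | zero =>
    rcases j with _ | i
    · exact hself G
    · simp [hm]
  | succ m ih =>
    rcases j with _ | i
    · exact hself G
    have hG : ⊥ < G := bot_lt_iff_ne_bot.2 fun h => by
      rw [h, hrk0] at hm
      omega
    obtain ⟨c, -, hcG⟩ := exists_le_covBy_of_lt hG
    have hc : rk c = m := by have := hcov c G hcG; omega
    set S := {x | x ≤ G ∧ rk x + (i + 1) = rk G}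
    have hbelow : S ∩ Iic c = {x | x ≤ c ∧ rk x + i = rk c} := by
      ext x
      simp only [S, mem_inter_iff, mem_ofPred_eq, mem_Iic]
      constructor
      · rintro ⟨⟨-, hx⟩, hxc⟩
        exact ⟨hxc, by omega⟩
      · rintro ⟨hxc, hx⟩
        exact ⟨⟨hxc.trans hcG.le, by omega⟩, hxc⟩
    have hnotBelow : {z | z ≤ c ∧ rk z + (i + 1) = rk c} ⊆ (· ⊓ c) '' (S \ Iic c) := by
      rintro z ⟨hzc, hz⟩
      obtain ⟨x, hzx, hxG, hxc⟩ := exists_covBy_le_not_le_of_le_of_covBy hdiam hzc hcG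
      have hx := hcov z x hzx
      refine ⟨x, ⟨⟨hxG, by omega⟩, hxc⟩, ?_⟩
      exact (hzx.eq_or_eq (le_inf hzx.le hzc) inf_le_left).resolve_right (mt inf_eq_left.1 hxc)
    calc (rk G).choose (i + 1) = (rk c).choose i + (rk c).choose (i + 1) := by
          rw [hm, hc, Nat.choose_succ_succ]
      _ ≤ (S ∩ Iic c).ncard + (S \ Iic c).ncard := by
        refine Nat.add_le_add ?_ ?_
        · exact hbelow ▸ ih c i hc
        · exact (ih c (i + 1) hc).trans ((ncard_le_ncard hnotBelow).trans ncard_image_le)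
      _ = S.ncard := ncard_inter_add_ncard_sdiff_eq_ncard S _

end Diamond

theorem stmt_2_general {L : Type*} [Lattice L] [BoundedOrder L] [Fintype L]
    (d : ℕ) (rk : L → ℕ) (hrk0 : rk ⊥ = 0)
    (hcov : ∀ a b : L, a ⋖ b → rk b = rk a + 1)
    (hdiamond : ∀ a b : L, a ≤ b → rk b = rk a + 2 → (Set.Icc a b).ncard = 4)
    (G : L) (r : ℕ) (hG : rk G = d + 2 - r)
    (k : ℕ) (hk1 : r ≤ k + 1) (hk2 : k + 1 ≤ d + 1) :
    Nat.choose (d - r + 2) (k + 1 - r) ≤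
      {x : L | x ≤ G ∧ rk x = d + 2 - (k + 1)}.ncard := by
  have hdiam : ∀ ⦃y c x : L⦄, y ⋖ c → c ⋖ x → ∃ w ≠ c, y ⋖ w ∧ w ⋖ x := fun _ _ _ =>
    exists_ne_covBy_covBy_of_ncard_Icc hcov hdiamond
  -- `d - r + 2` is truncated subtraction; it differs from `rk G` only at `r = k + 1 = d + 1`.
  calc (d - r + 2).choose (k + 1 - r) = (rk G).choose (k + 1 - r) := by
        rcases (by omega : d - r + 2 = rk G ∨ k + 1 - r = 0) with h | h <;> simp [h]
    _ ≤ {x | x ≤ G ∧ rk x + (k + 1 - r) = rk G}.ncard :=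
      choose_rank_le_ncard_le_rank_add_eq hrk0 hcov hdiam G _
    _ = {x : L | x ≤ G ∧ rk x = d + 2 - (k + 1)}.ncard := by
      congr 1
      ext x
      simp only [mem_ofPred_eq, hG]
      exact and_congr_right fun _ => by omega

/-- Dual form of Xue's lemma: in a diamond lattice of rank `d+2`, for an element `G`
of corank `r` (rank `d+2-r`) and `k` with `r ≤ k+1 ≤ d+1`, the lower interval `[⊥, G]`
contains at least `C(d-r+2, k+1-r)` elements of corank `k+1` (rank `d+2-(k+1)`). -/
theorem stmt_2 {L : Type*} [Lattice L] [BoundedOrder L] [Fintype L]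
    (d : ℕ) (rk : L → ℕ) (hrk0 : rk ⊥ = 0)
    (hcov : ∀ a b : L, a ⋖ b → rk b = rk a + 1)
    (hrtop : rk ⊤ = d + 2)
    (hdiamond : ∀ a b : L, a ≤ b → rk b = rk a + 2 → (Set.Icc a b).ncard = 4)
    (G : L) (r : ℕ) (hr : r ≤ d + 2) (hG : rk G = d + 2 - r)
    (k : ℕ) (hk1 : r ≤ k + 1) (hk2 : k + 1 ≤ d + 1) :
    Nat.choose (d - r + 2) (k + 1 - r) ≤
      {x : L | x ≤ G ∧ rk x = d + 2 - (k + 1)}.ncard :=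
  stmt_2_general d rk hrk0 hcov hdiamond G r hG k hk1 hk2
end

section
/- For all integers d ≥ 1 and k with 0 ≤ k ≤ d−1, if a, b are nonnegative integers with a + b ≥ d+1, then C(a, d−k) + C(b, d−k) ≥ C(⌈(d+1)/2⌉, d−k) + C(⌊(d+1)/2⌋, d−k). -/
lemma step_lem (m a b : ℕ) (h : b ≤ a) :
    Nat.choose a (m+1) + Nat.choose (b+1) (m+1) ≤
      Nat.choose (a+1) (m+1) + Nat.choose b (m+1) := by
  have h1 : Nat.choose (a+1) (m+1) = Nat.choose a m + Nat.choose a (m+1) :=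
    Nat.choose_succ_succ a m
  have h2 : Nat.choose (b+1) (m+1) = Nat.choose b m + Nat.choose b (m+1) :=
    Nat.choose_succ_succ b m
  have hmono : Nat.choose b m ≤ Nat.choose a m := Nat.choose_le_choose m h
  omega

lemma bal_lem (m s : ℕ) : ∀ i, Nat.choose ((s+1)/2) (m+1) + Nat.choose (s/2) (m+1) ≤
    Nat.choose ((s+1)/2 + i) (m+1) + Nat.choose (s/2 - i) (m+1) := by
  intro i
  induction i with
  | zero => simp
  | succ i ih =>
    have ha : (s+1)/2 + (i+1) = ((s+1)/2 + i) + 1 := by omega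
    rw [ha]
    by_cases hi : i < s / 2
    · refine ih.trans ?_
      have hb : s/2 - i = (s/2 - (i+1)) + 1 := by omega
      rw [hb] at ih ⊢
      exact step_lem m ((s+1)/2 + i) (s/2 - (i+1)) (by omega)
    · have h0 : s/2 - i = 0 := by omega
      have h1 : s/2 - (i+1) = 0 := by omega
      rw [h0] at ih
      rw [h1]
      have := Nat.choose_le_choose (m+1)
        (by omega : (s+1)/2 + i ≤ ((s+1)/2 + i) + 1)
      omega

/-- Convexity-type inequality (Lemma 2.11 of Hinman 2023): for `d ≥ 1`, `0 ≤ k ≤ d-1`,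
and nonnegative integers `a, b` with `a + b ≥ d + 1`,
`C(a, d-k) + C(b, d-k) ≥ C(⌈(d+1)/2⌉, d-k) + C(⌊(d+1)/2⌋, d-k)`. -/
theorem stmt_3 (d k : ℕ) (hd : 1 ≤ d) (hk : k ≤ d - 1)
    (a b : ℕ) (hab : d + 1 ≤ a + b) :
    Nat.choose ((d + 2) / 2) (d - k) + Nat.choose ((d + 1) / 2) (d - k) ≤
      Nat.choose a (d - k) + Nat.choose b (d - k) := by
  obtain ⟨m, hm⟩ : ∃ m, d - k = m + 1 := ⟨d - k - 1, by omega⟩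
  rw [hm]
  obtain ⟨a', b', hab', haa, hbb⟩ :
      ∃ a' b', a' + b' = d + 1 ∧ a' ≤ a ∧ b' ≤ b :=
    ⟨(d+1) - min b (d+1), min b (d+1), by omega, by omega, by omega⟩
  have key : Nat.choose ((d+2)/2) (m+1) + Nat.choose ((d+1)/2) (m+1) ≤
      Nat.choose a' (m+1) + Nat.choose b' (m+1) := by
    have hcd : (d + 1 + 1)/2 = (d+2)/2 := by omega
    rcases le_or_gt ((d+2)/2) a' with h | h
    · obtain ⟨i, hi⟩ : ∃ i, a' = (d+2)/2 + i := ⟨a' - (d+2)/2, by omega⟩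
      have hb2 : b' = (d+1)/2 - i := by omega
      rw [hi, hb2]
      have := bal_lem m (d+1) i
      rw [hcd] at this
      exact this
    · have h2 : (d+2)/2 ≤ b' := by omega
      obtain ⟨i, hi⟩ : ∃ i, b' = (d+2)/2 + i := ⟨b' - (d+2)/2, by omega⟩
      have ha2 : a' = (d+1)/2 - i := by omega
      rw [hi, ha2]
      have := bal_lem m (d+1) i
      rw [hcd] at this
      omega
  have h1 : Nat.choose a' (m+1) ≤ Nat.choose a (m+1) := Nat.choose_le_choose _ haa
  have h2 : Nat.choose b' (m+1) ≤ Nat.choose b (m+1) := Nat.choose_le_choose _ hbb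
  omega
end

section
/- Let L be a diamond lattice of rank d+2. Then for every 0 ≤ k ≤ d, the number f_k(L) of elements of rank k+1 satisfies f_k(L) ≥ C(d+1, d−k) and f_k(L) ≥ C(d+1, k+1); in particular f_k(L) ≥ max{C(d+1,k+1), C(d+1,d−k)}. -/
set_option linter.unusedSectionVars false
section DiamondHelpers

universe u

variable {L : Type u} [Lattice L] [BoundedOrder L] [Fintype L]

/-- In a finite lattice, below any strict inequality there is a cover just below the top. -/
lemma dl_exists_le_covBy {a b : L} (h : a < b) : ∃ y, a ≤ y ∧ y ⋖ b := by
  obtain ⟨y, hy, hmax⟩ := Set.Finite.exists_maximalFor id {x : L | a ≤ x ∧ x < b}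
    (Set.toFinite _) ⟨a, le_rfl, h⟩
  refine ⟨y, hy.1, hy.2, fun x hx hxb => ?_⟩
  exact absurd (hmax (j := x) ⟨hy.1.trans hx.le, hxb⟩ hx.le) (not_le_of_gt hx)

lemma dl_exists_covBy_le {a b : L} (h : a < b) : ∃ x, a ⋖ x ∧ x ≤ b := by
  obtain ⟨y, hy, hmin⟩ := Set.Finite.exists_minimalFor id {x : L | a < x ∧ x ≤ b}
    (Set.toFinite _) ⟨b, h, le_rfl⟩
  refine ⟨y, ⟨hy.1, fun x hx hxy => ?_⟩, hy.2⟩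
  exact absurd (hmin (j := x) ⟨hx, hxy.le.trans hy.2⟩ hxy.le) (not_le_of_gt hxy)

variable (rk : L → ℕ) (hcov : ∀ a b : L, a ⋖ b → rk b = rk a + 1)

include hcov

lemma dl_rk_lt_of_lt : ∀ {a b : L}, a < b → rk a < rk b := by
  suffices h : ∀ n, ∀ {a b : L}, a < b → rk b ≤ n → rk a < rk b by
    intro a b hab; exact h (rk b) hab le_rfl
  intro n
  induction n with
  | zero =>
    intro a b hab hle
    obtain ⟨y, _, hyb⟩ := dl_exists_le_covBy hab
    have := hcov y b hyb
    omega
  | succ n ih =>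
    intro a b hab hle
    obtain ⟨y, hay, hyb⟩ := dl_exists_le_covBy hab
    have hb := hcov y b hyb
    rcases eq_or_lt_of_le hay with rfl | hay'
    · omega
    · have := ih hay' (by omega); omega

lemma dl_rk_le_of_le {a b : L} (h : a ≤ b) : rk a ≤ rk b := by
  rcases eq_or_lt_of_le h with rfl | h'
  · exact le_rfl
  · exact (dl_rk_lt_of_lt rk hcov h').le

lemma dl_eq_of_le_of_rk_le {a b : L} (h : a ≤ b) (hr : rk b ≤ rk a) : a = b := by
  rcases eq_or_lt_of_le h with rfl | h'
  · rfl
  · exact absurd (dl_rk_lt_of_lt rk hcov h') (by omega)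

lemma dl_covBy_of_lt_rk {a b : L} (h : a < b) (hr : rk b = rk a + 1) : a ⋖ b := by
  refine ⟨h, fun x hx hxb => ?_⟩
  have h1 := dl_rk_lt_of_lt rk hcov hx
  have h2 := dl_rk_lt_of_lt rk hcov hxb
  omega

variable (hdiamond : ∀ a b : L, a ≤ b → rk b = rk a + 2 → (Set.Icc a b).ncard = 4)

include hdiamond

/-- In a diamond lattice, any cover chain `z ⋖ y ⋖ w` has a second middle element. -/
lemma dl_exists_second {z y w : L} (hzy : z ⋖ y) (hyw : y ⋖ w) :
    ∃ u, u ≠ y ∧ z ⋖ u ∧ u ⋖ w := by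
  have hzw : z ≤ w := hzy.le.trans hyw.le
  have hrw : rk w = rk z + 2 := by
    have h1 := hcov z y hzy; have h2 := hcov y w hyw; omega
  have h4 := hdiamond z w hzw hrw
  have h3 : ({z, y, w} : Set L).ncard ≤ 3 := by
    refine le_trans (Set.ncard_insert_le _ _) ?_
    have := Set.ncard_insert_le y ({w} : Set L)
    simp only [Set.ncard_singleton] at this ⊢
    omega
  have hex : ∃ u ∈ Set.Icc z w, u ∉ ({z, y, w} : Set L) := by
    by_contra hcon
    push_neg at hcon
    have hsub : Set.Icc z w ⊆ ({z, y, w} : Set L) := hcon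
    have := Set.ncard_le_ncard hsub (Set.toFinite _)
    omega
  obtain ⟨u, ⟨hzu, huw⟩, hu⟩ := hex
  simp only [Set.mem_insert_iff, Set.mem_singleton_iff, not_or] at hu
  obtain ⟨huz, huy, huww⟩ := hu
  have hzu' : z < u := lt_of_le_of_ne hzu (Ne.symm huz)
  have huw' : u < w := lt_of_le_of_ne huw huww
  have hr1 := dl_rk_lt_of_lt rk hcov hzu'
  have hr2 := dl_rk_lt_of_lt rk hcov huw'
  have hru : rk u = rk z + 1 := by omega
  exact ⟨u, huy, dl_covBy_of_lt_rk rk hcov hzu' hru,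
    dl_covBy_of_lt_rk rk hcov huw' (by omega)⟩

/-- Every element `z ≤ c < ⊤` is covered by some element not below `c`. -/
lemma dl_exists_cover_not_le :
    ∀ n, ∀ {z c : L}, z ≤ c → c < ⊤ → rk c ≤ rk z + n → ∃ w, z ⋖ w ∧ ¬ w ≤ c := by
  intro n
  induction n with
  | zero =>
    intro z c hzc hct hle
    have hz : z = c := dl_eq_of_le_of_rk_le rk hcov hzc (by omega)
    subst hz
    obtain ⟨x, hx, _⟩ := dl_exists_covBy_le (lt_of_lt_of_le hct le_top : z < ⊤)
    exact ⟨x, hx, fun hxz => absurd (le_antisymm hxz hx.1.le) (ne_of_lt hx.1).symm⟩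
  | succ n ih =>
    intro z c hzc hct hle
    by_cases h : rk c ≤ rk z + n
    · exact ih hzc hct h
    have hzc' : z < c := lt_of_le_of_ne hzc (by rintro rfl; omega)
    obtain ⟨y, hzy, hyc⟩ := dl_exists_covBy_le hzc'
    have hry := hcov z y hzy
    obtain ⟨w, hyw, hwnc⟩ := ih hyc hct (by omega)
    obtain ⟨u, hune, hzu, huw⟩ := dl_exists_second rk hcov hdiamond hzy hyw
    refine ⟨u, hzu, fun huc => hwnc ?_⟩
    have hru := hcov z u hzu
    have hrw := hcov y w hyw
    have hlt : y < y ⊔ u := by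
      rcases eq_or_lt_of_le (le_sup_left : y ≤ y ⊔ u) with he | h'
      · exfalso
        have hu_le : u ≤ y := le_sup_right.trans he.ge
        exact hune (dl_eq_of_le_of_rk_le rk hcov hu_le (by omega))
      · exact h'
    have hle2 : y ⊔ u ≤ w := sup_le hyw.le huw.le
    have hr3 := dl_rk_lt_of_lt rk hcov hlt
    have heq : y ⊔ u = w := dl_eq_of_le_of_rk_le rk hcov hle2 (by omega)
    rw [← heq]
    exact sup_le hyc huc

omit hdiamond

/-- An element not below `c` covers at most one element below `c` (of equal rank). -/
lemma dl_cover_unique {c w z1 z2 : L} (hw : ¬ w ≤ c) (h1 : z1 ⋖ w) (h2 : z2 ⋖ w)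
    (hc1 : z1 ≤ c) (hc2 : z2 ≤ c) (hr : rk z1 = rk z2) : z1 = z2 := by
  by_contra hne
  have hlt : z1 < z1 ⊔ z2 := by
    rcases eq_or_lt_of_le (le_sup_left : z1 ≤ z1 ⊔ z2) with he | h'
    · exact absurd (dl_eq_of_le_of_rk_le rk hcov (le_sup_right.trans he.ge) (by omega)).symm hne
    · exact h'
  have hle2 : z1 ⊔ z2 ≤ w := sup_le h1.le h2.le
  have hr1 := hcov z1 w h1
  have hr3 := dl_rk_lt_of_lt rk hcov hlt
  have heq : z1 ⊔ z2 = w := dl_eq_of_le_of_rk_le rk hcov hle2 (by omega)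
  exact hw (heq ▸ sup_le hc1 hc2)

end DiamondHelpers

universe u

theorem dl_main (d : ℕ) :
    ∀ {L : Type u} [Lattice L] [BoundedOrder L] [Fintype L] (rk : L → ℕ),
      rk ⊥ = 0 → (∀ a b : L, a ⋖ b → rk b = rk a + 1) → rk ⊤ = d + 2 →
      (∀ a b : L, a ≤ b → rk b = rk a + 2 → (Set.Icc a b).ncard = 4) →
      ∀ k, k ≤ d → Nat.choose (d + 1) (k + 1) ≤ {x : L | rk x = k + 1}.ncard := by
  induction d with
  | zero =>
    intro L _ _ _ rk hrk0 hcov hrtop hdiamond k hk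
    interval_cases k
    have hbt : (⊥ : L) < ⊤ := lt_of_le_of_ne bot_le (by intro h; rw [← h, hrk0] at hrtop; omega)
    obtain ⟨x, hx, _⟩ := dl_exists_covBy_le hbt
    have hrx : rk x = 1 := by have := hcov ⊥ x hx; omega
    have hne : {x : L | rk x = 1}.Nonempty := ⟨x, hrx⟩
    have := (Set.ncard_pos (Set.toFinite _)).mpr hne
    simpa [Nat.one_le_iff_ne_zero, Nat.pos_iff_ne_zero] using this
  | succ n ih =>
    intro L _ _ _ rk hrk0 hcov hrtop hdiamond k hk
    have hbt : (⊥ : L) < ⊤ := lt_of_le_of_ne bot_le (by intro h; rw [← h, hrk0] at hrtop; omega)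
    obtain ⟨c, _, hc⟩ := dl_exists_le_covBy hbt
    have hrc : rk c = n + 2 := by have := hcov c ⊤ hc; omega
    -- the sublattice `Iic c`
    haveI : Fintype (Set.Iic c) := Fintype.ofFinite _
    set rk' : Set.Iic c → ℕ := fun x => rk x.val with hrk'
    have hcovM : ∀ a b : Set.Iic c, a ⋖ b → a.val ⋖ b.val := by
      intro a b hab
      refine ⟨Subtype.coe_lt_coe.mpr hab.1, fun x hx hxb => ?_⟩
      exact hab.2 (show a < ⟨x, hxb.le.trans b.2⟩ from Subtype.coe_lt_coe.mp hx)
        (Subtype.coe_lt_coe.mp hxb)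
    have hcov' : ∀ a b : Set.Iic c, a ⋖ b → rk' b = rk' a + 1 :=
      fun a b hab => hcov a.val b.val (hcovM a b hab)
    have hrtop' : rk' ⊤ = n + 2 := hrc
    have hrbot' : rk' ⊥ = 0 := hrk0
    have hdia' : ∀ a b : Set.Iic c, a ≤ b → rk' b = rk' a + 2 →
        (Set.Icc a b).ncard = 4 := by
      intro a b hab hr
      have himg : Subtype.val '' (Set.Icc a b) = Set.Icc a.val b.val := by
        ext x
        constructor
        · rintro ⟨y, hy, rfl⟩
          exact ⟨Subtype.coe_le_coe.mpr hy.1, Subtype.coe_le_coe.mpr hy.2⟩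
        · rintro ⟨h1, h2⟩
          exact ⟨⟨x, h2.trans b.2⟩, ⟨Subtype.coe_le_coe.mp h1, Subtype.coe_le_coe.mp h2⟩, rfl⟩
      have := hdiamond a.val b.val (Subtype.coe_le_coe.mpr hab) hr
      rw [← himg, Set.ncard_image_of_injective _ Subtype.val_injective] at this
      exact this
    -- Count below c via the image of the subtype set.
    have hcount : ∀ m : ℕ, {x : Set.Iic c | rk' x = m}.ncard =
        {x : L | rk x = m ∧ x ≤ c}.ncard := by
      intro m
      have himg : Subtype.val '' {x : Set.Iic c | rk' x = m} = {x : L | rk x = m ∧ x ≤ c} := by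
        ext x
        constructor
        · rintro ⟨y, hy, rfl⟩; exact ⟨hy, y.2⟩
        · rintro ⟨h1, h2⟩; exact ⟨⟨x, h2⟩, h1, rfl⟩
      rw [← himg, Set.ncard_image_of_injective _ Subtype.val_injective]
    -- Part A : elements of rank k+1 below c
    have hA : Nat.choose (n + 1) (k + 1) ≤ {x : L | rk x = k + 1 ∧ x ≤ c}.ncard := by
      rcases Nat.lt_or_ge k (n + 1) with hk' | hk'
      · have := ih rk' hrbot' hcov' hrtop' hdia' k (by omega)
        rwa [hcount] at this
      · have hkeq : k = n + 1 := by omega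
        rw [hkeq, Nat.choose_succ_self]
        exact Nat.zero_le _
    -- Part B : elements of rank k+1 not below c
    have hB : Nat.choose (n + 1) k ≤ {x : L | rk x = k + 1 ∧ ¬ x ≤ c}.ncard := by
      have hT : Nat.choose (n + 1) k ≤ {x : L | rk x = k ∧ x ≤ c}.ncard := by
        rcases Nat.eq_zero_or_pos k with rfl | hkpos
        · have hne : {x : L | rk x = 0 ∧ x ≤ c}.Nonempty := ⟨⊥, hrk0, bot_le⟩
          have := (Set.ncard_pos (Set.toFinite _)).mpr hne
          simpa [Nat.one_le_iff_ne_zero, Nat.pos_iff_ne_zero] using this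
        · obtain ⟨k', rfl⟩ : ∃ k', k = k' + 1 := ⟨k - 1, by omega⟩
          have := ih rk' hrbot' hcov' hrtop' hdia' k' (by omega)
          rwa [hcount] at this
      refine le_trans hT ?_
      -- injection z ↦ chosen cover not below c
      have hwex : ∀ z : L, z ≤ c → ∃ w, z ⋖ w ∧ ¬ w ≤ c := by
        intro z hz
        exact dl_exists_cover_not_le rk hcov hdiamond (rk c) hz hc.lt
          (by omega)
      classical
      set f : L → L := fun z => if h : z ≤ c then Classical.choose (hwex z h) else z with hf
      have hfspec : ∀ z : L, ∀ h : z ≤ c, z ⋖ f z ∧ ¬ f z ≤ c := by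
        intro z h
        simp only [hf, dif_pos h]
        exact Classical.choose_spec (hwex z h)
      refine Set.ncard_le_ncard_of_injOn f ?_ ?_ (Set.toFinite _)
      · rintro z ⟨hz1, hz2⟩
        obtain ⟨hcv, hnl⟩ := hfspec z hz2
        exact ⟨by rw [hcov z (f z) hcv, hz1], hnl⟩
      · rintro z1 ⟨hr1, hl1⟩ z2 ⟨hr2, hl2⟩ heq
        obtain ⟨hcv1, hnl1⟩ := hfspec z1 hl1
        obtain ⟨hcv2, _⟩ := hfspec z2 hl2
        rw [heq] at hcv1 hnl1
        exact dl_cover_unique rk hcov hnl1 hcv1 hcv2 hl1 hl2 (by omega)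
    -- combine
    have hsplit : {x : L | rk x = k + 1}.ncard =
        {x : L | rk x = k + 1 ∧ x ≤ c}.ncard + {x : L | rk x = k + 1 ∧ ¬ x ≤ c}.ncard := by
      rw [← Set.ncard_union_eq ?_ (Set.toFinite _) (Set.toFinite _)]
      · congr 1
        ext x
        by_cases h : x ≤ c <;> simp [h]
      · rw [Set.disjoint_left]
        rintro x ⟨_, h1⟩ ⟨_, h2⟩
        exact h2 h1
    rw [hsplit]
    have hpascal : Nat.choose (n + 1 + 1) (k + 1)
        = Nat.choose (n + 1) k + Nat.choose (n + 1) (k + 1) :=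
      Nat.choose_succ_succ (n + 1) k
    omega

/-- In a diamond lattice of rank `d+2`, the number of elements of rank `k+1` is at least
`max (C(d+1, k+1)) (C(d+1, d-k))` for every `0 ≤ k ≤ d`. -/
theorem stmt_8 {L : Type*} [Lattice L] [BoundedOrder L] [Fintype L]
    (d : ℕ) (rk : L → ℕ) (hrk0 : rk ⊥ = 0)
    (hcov : ∀ a b : L, a ⋖ b → rk b = rk a + 1)
    (hrtop : rk ⊤ = d + 2)
    (hdiamond : ∀ a b : L, a ≤ b → rk b = rk a + 2 → (Set.Icc a b).ncard = 4) :
    ∀ k ≤ d, max (Nat.choose (d + 1) (k + 1)) (Nat.choose (d + 1) (d - k)) ≤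
      {x : L | rk x = k + 1}.ncard := by
  intro k hk
  have hsymm : Nat.choose (d + 1) (d - k) = Nat.choose (d + 1) (k + 1) := by
    have h1 : d - k = (d + 1) - (k + 1) := by omega
    rw [h1, Nat.choose_symm (by omega)]
  rw [hsymm, max_self]
  exact dl_main d rk hrk0 hcov hrtop hdiamond k hk
end

section
/- Let L be a diamond lattice, and let G be an element of L such that the interval [0̂,G] is graded of rank d+1 (d ≥ 0) and has exactly d+1 elements of rank d. Then [0̂,G] is isomorphic to the Boolean lattice B_{d+1}. -/
set_option linter.unusedSectionVars false

section Aux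
variable {L : Type*} [Lattice L] [BoundedOrder L] [Fintype L] {rk : L → ℕ}

lemma aux_exists_max {a b : L} (hab : a < b) : ∃ c, a ≤ c ∧ c ⋖ b := by
  obtain ⟨c, hc, hmax⟩ := Set.Finite.exists_maximalFor id {c | a ≤ c ∧ c < b}
    (Set.toFinite _) ⟨a, le_rfl, hab⟩
  refine ⟨c, hc.1, hc.2, fun z hz1 hz2 => ?_⟩
  exact absurd (hmax ⟨hc.1.trans hz1.le, hz2⟩ hz1.le) hz1.not_ge

lemma aux_rk_lt (hcov : ∀ a b : L, a ⋖ b → rk b = rk a + 1) :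
    ∀ {a b : L}, a < b → rk a < rk b := by
  have H : ∀ b a : L, a < b → rk a < rk b := by
    intro b
    induction b using WellFoundedLT.induction with
    | ind b ih =>
      intro a hab
      obtain ⟨c, hac, hcb⟩ := aux_exists_max hab
      rw [hcov c b hcb]
      rcases eq_or_lt_of_le hac with rfl | hlt
      · omega
      · have := ih c hcb.lt a hlt; omega
  exact fun {a b} h => H b a h

variable (hcov : ∀ a b : L, a ⋖ b → rk b = rk a + 1)

include hcov

lemma aux_rk_le {a b : L} (hab : a ≤ b) : rk a ≤ rk b := by
  rcases eq_or_lt_of_le hab with rfl | h'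
  · exact le_rfl
  · exact (aux_rk_lt hcov h').le

lemma aux_eq_of_rk {a b : L} (hab : a ≤ b) (h : rk b ≤ rk a) : a = b := by
  rcases eq_or_lt_of_le hab with rfl | h'
  · rfl
  · exact absurd (aux_rk_lt hcov h') (by omega)

lemma aux_cov_of_rk {a b : L} (hab : a ≤ b) (h : rk b = rk a + 1) : a ⋖ b := by
  have hne : a ≠ b := fun e => by rw [e] at h; omega
  refine ⟨hab.lt_of_ne hne, fun z hz1 hz2 => ?_⟩
  have := aux_rk_lt hcov hz1
  have := aux_rk_lt hcov hz2
  omega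

variable (hdiamond : ∀ a b : L, a ≤ b → rk b = rk a + 2 → (Set.Icc a b).ncard = 4)

include hdiamond

/-- The two-middles lemma: a rank-2 interval has exactly two middle elements. -/
lemma aux_middles {a b : L} (hab : a ≤ b) (h2 : rk b = rk a + 2) :
    ∃ u v, u ≠ v ∧ (a ⋖ u ∧ u ⋖ b) ∧ (a ⋖ v ∧ v ⋖ b) ∧
      ∀ t, a ≤ t → t ≤ b → t = a ∨ t = b ∨ t = u ∨ t = v := by
  have hlt : a < b := hab.lt_of_ne (fun e => by rw [e] at h2; omega)
  have hicc : Set.Icc a b = insert a (insert b {t | a < t ∧ t < b}) := by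
    ext t
    simp only [Set.mem_Icc, Set.mem_insert_iff, Set.mem_setOf_eq]
    constructor
    · rintro ⟨h1, h3⟩
      rcases eq_or_lt_of_le h1 with rfl | h1'
      · exact Or.inl rfl
      rcases eq_or_lt_of_le h3 with rfl | h3'
      · exact Or.inr (Or.inl rfl)
      exact Or.inr (Or.inr ⟨h1', h3'⟩)
    · rintro (rfl | rfl | ⟨h1, h3⟩)
      · exact ⟨le_rfl, hlt.le⟩
      · exact ⟨hlt.le, le_rfl⟩
      · exact ⟨h1.le, h3.le⟩
  have h4 := hdiamond a b hab h2
  rw [hicc, Set.ncard_insert_of_notMem (by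
      simp only [Set.mem_insert_iff, Set.mem_setOf_eq]
      push_neg
      exact ⟨hlt.ne, fun h => absurd h (lt_irrefl a)⟩) (Set.toFinite _),
    Set.ncard_insert_of_notMem (by simp) (Set.toFinite _)] at h4
  have h2' : {t | a < t ∧ t < b}.ncard = 2 := by omega
  obtain ⟨u, v, huv, hM⟩ := Set.ncard_eq_two.1 h2'
  have hmid : ∀ t : L, a < t → t < b → (a ⋖ t ∧ t ⋖ b) := by
    intro t h1 h3
    have r1 := aux_rk_lt hcov h1
    have r3 := aux_rk_lt hcov h3
    exact ⟨aux_cov_of_rk hcov h1.le (by omega), aux_cov_of_rk hcov h3.le (by omega)⟩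
  have hu : a < u ∧ u < b := by rw [Set.ext_iff] at hM; exact (hM u).2 (by simp)
  have hv : a < v ∧ v < b := by rw [Set.ext_iff] at hM; exact (hM v).2 (by simp)
  refine ⟨u, v, huv, hmid u hu.1 hu.2, hmid v hv.1 hv.2, fun t h1 h3 => ?_⟩
  rcases eq_or_lt_of_le h1 with rfl | h1'
  · exact Or.inl rfl
  rcases eq_or_lt_of_le h3 with rfl | h3'
  · exact Or.inr (Or.inl rfl)
  have : t ∈ ({u, v} : Set L) := hM ▸ ⟨h1', h3'⟩
  rcases this with h | h
  · exact Or.inr (Or.inr (Or.inl h))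
  · exact Or.inr (Or.inr (Or.inr h))



/-- Lower bound: an interval of rank k has at least k coatoms. -/
lemma aux_lb : ∀ (k : ℕ) (b y : L), b ≤ y → rk y = rk b + k →
    k ≤ {x | b ≤ x ∧ x ⋖ y}.ncard := by
  intro k
  induction k with
  | zero => intro b y _ _; omega
  | succ k ih =>
    intro b y hby hk
    have hlt : b < y := hby.lt_of_ne (fun e => by rw [e] at hk; omega)
    obtain ⟨F, hbF, hFy⟩ := aux_exists_max hlt
    have hrkF : rk F = rk b + k := by have := hcov F y hFy; omega
    have hFin : F ∈ {x | b ≤ x ∧ x ⋖ y} := ⟨hbF, hFy⟩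
    have key : ∀ x ∈ {x | b ≤ x ∧ x ⋖ F}, ∃ F', (F' ∈ {x | b ≤ x ∧ x ⋖ y} \ {F}) ∧
        x ≤ F' ∧ rk F' = rk x + 1 := by
      rintro x ⟨hbx, hxF⟩
      have hrkx : rk x + 1 = rk F := (hcov x F hxF).symm
      obtain ⟨u, v, huv, ⟨hu1, hu2⟩, ⟨hv1, hv2⟩, hall⟩ :=
        aux_middles hcov hdiamond (hxF.le.trans hFy.le) (by omega)
      have hFuv : F = u ∨ F = v := by
        rcases hall F hxF.le hFy.le with h | h | h | h
        · exact absurd h.symm hxF.lt.ne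
        · exact absurd h hFy.lt.ne
        · exact Or.inl h
        · exact Or.inr h
      rcases hFuv with rfl | rfl
      · exact ⟨v, ⟨⟨hbx.trans hv1.le, hv2⟩, fun hv => huv hv.symm⟩, hv1.le,
          hcov x v hv1⟩
      · exact ⟨u, ⟨⟨hbx.trans hu1.le, hu2⟩, fun hu => huv hu⟩, hu1.le, hcov x u hu1⟩
    choose! ψ hψ1 hψ2 hψ3 using key
    have hinj : Set.InjOn ψ {x | b ≤ x ∧ x ⋖ F} := by
      rintro x1 hx1 x2 hx2 he
      have h1 := hψ1 x1 hx1; have h2 := hψ2 x1 hx1; have h3 := hψ3 x1 hx1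
      have h1' := hψ1 x2 hx2; have h2' := hψ2 x2 hx2
      have hFne : ψ x1 ≠ F := h1.2
      have hnle : ¬ F ≤ ψ x1 := by
        intro hle
        exact hFne (aux_eq_of_rk hcov hle (by
          have := hcov x1 F hx1.2; omega)).symm
      have hm : F ⊓ ψ x1 < F := lt_of_le_of_ne inf_le_left
        (fun e => hnle (e ▸ inf_le_right))
      have e1 : x1 = F ⊓ ψ x1 := by
        by_contra hne
        exact hx1.2.2 (lt_of_le_of_ne (le_inf hx1.2.le h2) hne) hm
      have e2 : x2 = F ⊓ ψ x2 := by
        by_contra hne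
        exact hx2.2.2 (lt_of_le_of_ne (le_inf hx2.2.le (hψ2 x2 hx2)) hne)
          (he ▸ hm)
      rw [e1, e2, he]
    have hcard := Set.ncard_le_ncard_of_injOn ψ hψ1 hinj (Set.toFinite _)
    have := ih b F hbF hrkF
    have := Set.ncard_diff_singleton_add_one hFin (Set.toFinite _)
    omega

omit hcov hdiamond

lemma aux_subtype_cov {y : L} {u v : Set.Iic y} (h : u ⋖ v) : (u : L) ⋖ (v : L) := by
  refine ⟨h.lt, fun z hz1 hz2 => ?_⟩
  have hzy : z ≤ y := hz2.le.trans v.2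
  exact h.2 (show u < ⟨z, hzy⟩ from Subtype.coe_lt_coe.1 hz1)
    (Subtype.coe_lt_coe.1 hz2)

include hcov in
lemma aux_rk_card (hrk0 : rk ⊥ = 0) {y : L} {k : ℕ} (e : Set.Iic y ≃o Finset (Fin k)) :
    ∀ (c : ℕ) (x : L) (hx : x ≤ y), (e ⟨x, hx⟩).card = c → rk x = c := by
  intro c
  induction c with
  | zero =>
    intro x hx hc
    have he : e ⟨x, hx⟩ = (∅ : Finset (Fin k)) := Finset.card_eq_zero.1 hc
    have hb : e ⟨x, hx⟩ ≤ e ⟨⊥, bot_le⟩ := by rw [he]; exact Finset.empty_subset _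
    have : x ≤ ⊥ := e.le_iff_le.1 hb
    rw [le_bot_iff.1 this, hrk0]
  | succ c ih =>
    intro x hx hc
    obtain ⟨i, hi⟩ : ∃ i, i ∈ e ⟨x, hx⟩ := Finset.card_pos.1 (by omega)
    set A' := (e ⟨x, hx⟩).erase i with hA'
    have hcovA : A' ⋖ e ⟨x, hx⟩ := Finset.erase_covBy hi
    set x' := e.symm A' with hx'
    have hcov' : x' ⋖ (⟨x, hx⟩ : Set.Iic y) := by
      have := (apply_covBy_apply_iff (e.symm) (a := A') (b := e ⟨x, hx⟩)).2 hcovA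
      rwa [e.symm_apply_apply] at this
    have hc' : (e ⟨(x' : L), x'.2⟩).card = c := by
      have : (⟨(x' : L), x'.2⟩ : Set.Iic y) = x' := rfl
      rw [this, hx', e.apply_symm_apply, hA', Finset.card_erase_of_mem hi, hc]
      omega
    have := ih (x' : L) x'.2 hc'
    have := hcov x' x (aux_subtype_cov hcov')
    omega

end Aux

section Iso
variable {L : Type*} [Lattice L] [BoundedOrder L] [Fintype L] {rk : L → ℕ}

noncomputable def iso0 (hcov : ∀ a b : L, a ⋖ b → rk b = rk a + 1) {G : L}
    (hG : rk G = 0) : Set.Iic G ≃o Finset (Fin 0) := by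
  have hall : ∀ x : Set.Iic G, (x : L) = G := by
    intro x
    rcases eq_or_lt_of_le x.2 with h | h
    · exact h
    · exact absurd (aux_rk_lt hcov h) (by omega)
  exact
  { toFun := fun _ => ∅
    invFun := fun _ => ⟨G, le_rfl⟩
    left_inv := fun x => Subtype.ext (hall x).symm
    right_inv := fun A => (Finset.eq_empty_of_forall_notMem fun i => i.elim0).symm
    map_rel_iff' := by
      intro x y
      simp only [Equiv.coe_fn_mk, Finset.le_iff_subset, Finset.Subset.refl, true_iff]
      exact le_of_eq (Subtype.ext ((hall x).trans (hall y).symm)) }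

noncomputable def iso1 (hrk0 : rk ⊥ = 0) (hcov : ∀ a b : L, a ⋖ b → rk b = rk a + 1)
    {G : L} (hG : rk G = 1) : Set.Iic G ≃o Finset (Fin 1) := by
  classical
  have hall : ∀ x : L, x ≤ G → x = ⊥ ∨ x = G := by
    intro x hx
    rcases eq_or_lt_of_le hx with h | h
    · right; exact h
    · left
      have h2 := aux_rk_lt hcov h
      by_contra hb
      have h3 := aux_rk_lt hcov (bot_lt_iff_ne_bot.2 hb)
      rw [hrk0] at h3
      omega
  have hGbot : G ≠ ⊥ := fun e => by rw [e, hrk0] at hG; omega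
  refine
  { toFun := fun x => if (x : L) = ⊥ then ∅ else {0}
    invFun := fun A => if A = ∅ then ⟨⊥, bot_le⟩ else ⟨G, le_rfl⟩
    left_inv := ?_
    right_inv := ?_
    map_rel_iff' := ?_ }
  · intro x
    rcases hall x.1 x.2 with hx | hx
    · simp only [hx, if_pos rfl, if_pos rfl]
      exact Subtype.ext hx.symm
    · dsimp only
      rw [hx, if_neg hGbot, if_neg (Finset.singleton_ne_empty 0)]
      exact Subtype.ext hx.symm
  · intro A
    rcases Finset.subset_singleton_iff.1
      (fun i (_ : i ∈ A) => Finset.mem_singleton.2 (Subsingleton.elim i 0)) with hA | hA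
    · subst hA; dsimp only
      rw [if_pos rfl]; simp
    · subst hA; dsimp only
      rw [if_neg (Finset.singleton_ne_empty 0)]
      simp [hGbot]
  · intro x y
    rcases hall x.1 x.2 with hx | hx <;> rcases hall y.1 y.2 with hy | hy
    · simp only [hx, hy, if_pos rfl, Equiv.coe_fn_mk]
      have : x ≤ y := by
        rw [← Subtype.coe_le_coe, hx, hy]
      simp [this]
    · simp only [hx, hy, if_pos rfl, if_neg hGbot, Equiv.coe_fn_mk]
      have : x ≤ y := by rw [← Subtype.coe_le_coe, hx]; exact bot_le
      simp [this]
    · simp only [hx, hy, if_pos rfl, if_neg hGbot, Equiv.coe_fn_mk]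
      have h1 : ¬ x ≤ y := by
        rw [← Subtype.coe_le_coe, hx, hy, le_bot_iff]
        exact hGbot
      simp [h1, Finset.singleton_ne_empty]
    · simp only [hx, hy, if_neg hGbot, Equiv.coe_fn_mk]
      have : x ≤ y := by rw [← Subtype.coe_le_coe, hx, hy]
      simp [this]

end Iso

open Finset in
/-- `Finset (Fin (m+1))` splits as a product order. -/
noncomputable def boolIso (m : ℕ) : Finset (Fin m) × Bool ≃o Finset (Fin (m + 1)) := by
  have castEmb : Function.Embedding (Fin m) (Fin (m+1)) :=
    ⟨Fin.castSucc, Fin.castSucc_injective m⟩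
  refine
    { toFun := fun p => p.1.map ⟨Fin.castSucc, Fin.castSucc_injective m⟩ ∪
        (if p.2 then {Fin.last m} else ∅),
      invFun := fun B => (Finset.univ.filter (fun i : Fin m => i.castSucc ∈ B),
        decide (Fin.last m ∈ B)),
      left_inv := ?_, right_inv := ?_, map_rel_iff' := ?_ }
  · rintro ⟨A, b⟩
    have h1 : ∀ i : Fin m, (i.castSucc ∈ A.map ⟨Fin.castSucc, Fin.castSucc_injective m⟩ ∪
        (if b then {Fin.last m} else ∅)) ↔ i ∈ A := by
      intro i
      simp only [Finset.mem_union, Finset.mem_map, Function.Embedding.coeFn_mk]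
      constructor
      · rintro (⟨j, hj, he⟩ | h)
        · rwa [← Fin.castSucc_injective m he]
        · cases b <;> simp at h
      · intro h; exact Or.inl ⟨i, h, rfl⟩
    have h2 : (Fin.last m ∈ A.map ⟨Fin.castSucc, Fin.castSucc_injective m⟩ ∪
        (if b then {Fin.last m} else ∅)) ↔ b := by
      simp only [Finset.mem_union, Finset.mem_map, Function.Embedding.coeFn_mk]
      constructor
      · rintro (⟨j, hj, he⟩ | h)
        · exact absurd he (Fin.castSucc_lt_last j).ne
        · cases b; · simp at h
          · rfl
      · intro h; rw [h]; simp
    ext i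
    · simp only [Finset.mem_filter, Finset.mem_univ, true_and, h1]
    · simp [h2]
  · intro B
    ext i
    simp only [Finset.mem_union, Finset.mem_map, Finset.mem_filter, Finset.mem_univ, true_and,
      Function.Embedding.coeFn_mk]
    rcases eq_or_ne i (Fin.last m) with rfl | hne
    · constructor
      · rintro (⟨j, hj, he⟩ | h)
        · exact absurd he (Fin.castSucc_lt_last j).ne
        · rcases Decidable.em (Fin.last m ∈ B) with hm | hm
          · exact hm
          · simp [hm] at h
      · intro h; right; simp [h]
    · obtain ⟨j, rfl⟩ := Fin.exists_castSucc_eq.2 hne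
      constructor
      · rintro (⟨j', hj', he⟩ | h)
        · rwa [← Fin.castSucc_injective m he]
        · exfalso; rcases Decidable.em (Fin.last m ∈ B) with hm | hm <;> simp [hm] at h
      · intro h; exact Or.inl ⟨j, h, rfl⟩
  · rintro ⟨A, b⟩ ⟨A', b'⟩
    simp only [Equiv.coe_fn_mk, Prod.mk_le_mk]
    constructor
    · intro h
      constructor
      · intro i hi
        have : (i.castSucc : Fin (m+1)) ∈ A'.map ⟨Fin.castSucc, Fin.castSucc_injective m⟩ ∪
            (if b' then {Fin.last m} else ∅) := by
          apply h
          simp only [Finset.mem_union, Finset.mem_map, Function.Embedding.coeFn_mk]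
          exact Or.inl ⟨i, hi, rfl⟩
        simp only [Finset.mem_union, Finset.mem_map, Function.Embedding.coeFn_mk] at this
        rcases this with ⟨j, hj, he⟩ | hh
        · rwa [← Fin.castSucc_injective m he]
        · exfalso; cases b' <;> simp at hh
      · cases b
        · exact Bool.false_le b'
        · have : (Fin.last m) ∈ A'.map ⟨Fin.castSucc, Fin.castSucc_injective m⟩ ∪
              (if b' then {Fin.last m} else ∅) := by
            apply h; simp
          simp only [Finset.mem_union, Finset.mem_map, Function.Embedding.coeFn_mk] at this
          rcases this with ⟨j, hj, he⟩ | hh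
          · exact absurd he (Fin.castSucc_lt_last j).ne
          · cases b'
            · simp at hh
            · exact le_rfl
    · rintro ⟨hA, hb⟩ i hi
      simp only [Finset.mem_union, Finset.mem_map, Function.Embedding.coeFn_mk] at hi ⊢
      rcases hi with ⟨j, hj, he⟩ | hh
      · exact Or.inl ⟨j, hA hj, he⟩
      · right
        cases b
        · simp at hh
        · have : b' = true := Bool.le_iff_imp.1 hb rfl
          rw [this]; simpa using hh

section Main
variable {L : Type*} [Lattice L] [BoundedOrder L] [Fintype L]

lemma aux_main (rk : L → ℕ) (hrk0 : rk ⊥ = 0)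
    (hcov : ∀ a b : L, a ⋖ b → rk b = rk a + 1)
    (hdiamond : ∀ a b : L, a ≤ b → rk b = rk a + 2 → (Set.Icc a b).ncard = 4) :
    ∀ (m : ℕ) (G : L), rk G = m → ({x : L | x ≤ G ∧ rk x = m - 1}).ncard = m →
      Nonempty (Set.Iic G ≃o Finset (Fin m)) := by
  intro m
  induction m with
  | zero => exact fun G hG _ => ⟨iso0 hcov hG⟩
  | succ m ih =>
    intro G hG hC
    rcases Nat.eq_zero_or_pos m with rfl | hm
    · exact ⟨iso1 hrk0 hcov hG⟩
    simp only [Nat.add_sub_cancel] at hC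
    set C := {x : L | x ≤ G ∧ rk x = m} with hCdef
    have hCG : ∀ F ∈ C, F ⋖ G := fun F hF =>
      aux_cov_of_rk hcov hF.1 (by rw [hG, hF.2])
    -- every coatom interval has exactly m coatoms
    have coatom_count : ∀ F ∈ C, {x : L | x ≤ F ∧ rk x = m - 1}.ncard = m := by
      rintro F ⟨hFG, hFrk⟩
      have hub : {x : L | x ≤ F ∧ rk x = m - 1}.ncard ≤ m := by
        have key : ∀ x ∈ {x : L | x ≤ F ∧ rk x = m - 1},
            ∃ F', (F' ∈ C \ {F}) ∧ x ≤ F' := by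
          rintro x ⟨hxF, hxrk⟩
          have hxG : x ≤ G := hxF.trans hFG
          obtain ⟨u, v, huv, ⟨hu1, hu2⟩, ⟨hv1, hv2⟩, hall⟩ :=
            aux_middles hcov hdiamond hxG (by omega)
          have hxFlt : x < F := lt_of_le_of_ne hxF (fun e => by rw [e] at hxrk; omega)
          have hFuv : F = u ∨ F = v := by
            rcases hall F hxF hFG with h | h | h | h
            · exact absurd h.symm hxFlt.ne
            · exfalso; rw [h, hG] at hFrk; omega
            · exact Or.inl h
            · exact Or.inr h
          have humem : ∀ w, x ⋖ w → w ⋖ G → w ≠ F → w ∈ C \ {F} :=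
            fun w hw1 hw2 hwne =>
              ⟨⟨hw2.le, by rw [hcov w G hw2] at hG; omega⟩, hwne⟩
          rcases hFuv with rfl | rfl
          · exact ⟨v, humem v hv1 hv2 (fun h => huv h.symm), hv1.le⟩
          · exact ⟨u, humem u hu1 hu2 huv, hu1.le⟩
        choose! ψ hψ1 hψ2 using key
        have hinj : Set.InjOn ψ {x : L | x ≤ F ∧ rk x = m - 1} := by
          rintro x1 hx1 x2 hx2 he
          have hcov1 : x1 ⋖ F := aux_cov_of_rk hcov hx1.1
            (by have := hx1.2; omega)
          have hcov2 : x2 ⋖ F := aux_cov_of_rk hcov hx2.1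
            (by have := hx2.2; omega)
          have hFne : ψ x1 ≠ F := (hψ1 x1 hx1).2
          have hnle : ¬ F ≤ ψ x1 := fun hle =>
            hFne (aux_eq_of_rk hcov hle (by rw [hFrk, ((hψ1 x1 hx1).1).2])).symm
          have hm2 : F ⊓ ψ x1 < F := lt_of_le_of_ne inf_le_left
            (fun e => hnle (e.symm.le.trans inf_le_right))
          have e1 : x1 = F ⊓ ψ x1 := by
            by_contra hne
            exact hcov1.2 (lt_of_le_of_ne (le_inf hx1.1 (hψ2 x1 hx1)) hne) hm2
          have e2 : x2 = F ⊓ ψ x2 := by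
            by_contra hne
            exact hcov2.2 (lt_of_le_of_ne (le_inf hx2.1 (hψ2 x2 hx2)) hne) (he ▸ hm2)
          rw [e1, e2, he]
        have hcard := Set.ncard_le_ncard_of_injOn ψ hψ1 hinj (Set.toFinite _)
        have hFC : F ∈ C := ⟨hFG, hFrk⟩
        have := Set.ncard_diff_singleton_add_one hFC (Set.toFinite _)
        omega
      have hlbF := aux_lb hcov hdiamond m ⊥ F bot_le (by rw [hrk0]; omega)
      have hseq : {x : L | ⊥ ≤ x ∧ x ⋖ F} = {x : L | x ≤ F ∧ rk x = m - 1} := by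
        ext x
        simp only [Set.mem_setOf_eq, bot_le, true_and]
        constructor
        · intro hc; exact ⟨hc.le, by have := hcov _ _ hc; omega⟩
        · rintro ⟨h1, h2⟩; exact aux_cov_of_rk hcov h1 (by omega)
      rw [hseq] at hlbF
      omega
    have eIso : ∀ F ∈ C, Nonempty (Set.Iic F ≃o Finset (Fin m)) := fun F hF =>
      ih F hF.2 (coatom_count F hF)
    -- pick a coatom F1
    obtain ⟨F1, hF1⟩ : C.Nonempty := (Set.ncard_pos (Set.toFinite _)).1 (by omega)
    have hF1G : F1 ≤ G := hF1.1
    have hF1rk : rk F1 = m := hF1.2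
    have hGnF1 : ¬ G ≤ F1 := fun h => by
      have := aux_rk_le hcov h; omega
    -- the unique atom not below F1
    obtain ⟨a, ⟨haG, hanF1⟩, hamin⟩ := Set.Finite.exists_minimalFor id
      {x : L | x ≤ G ∧ ¬ x ≤ F1} (Set.toFinite _) ⟨G, le_rfl, hGnF1⟩
    have habot : a ≠ ⊥ := fun e => hanF1 (e ▸ bot_le)
    have hapos : 1 ≤ rk a := by
      have := aux_rk_lt hcov (bot_lt_iff_ne_bot.2 habot); omega
    have harank : rk a = 1 := by
      by_contra hne
      have hlb := aux_lb hcov hdiamond (rk a) ⊥ a bot_le (by omega)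
      obtain ⟨t1, ht1, t2, ht2, hne12⟩ :=
        (Set.one_lt_ncard (s := {x : L | ⊥ ≤ x ∧ x ⋖ a}) (Set.toFinite _)).1 (by omega)
      have key : ∀ t, t ⋖ a → t ≤ F1 → t = a ⊓ F1 := by
        intro t htc htF
        have h2 : a ⊓ F1 < a := lt_of_le_of_ne inf_le_left
          (fun e => hanF1 (e.symm.le.trans inf_le_right))
        by_contra hne'
        exact htc.2 (lt_of_le_of_ne (le_inf htc.le htF) hne') h2
      obtain ⟨t, htc, htF⟩ : ∃ t, t ⋖ a ∧ ¬ t ≤ F1 := by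
        by_contra hno; push_neg at hno
        rw [key t1 ht1.2 (hno t1 ht1.2), key t2 ht2.2 (hno t2 ht2.2)] at hne12
        exact hne12 rfl
      have := hamin ⟨htc.le.trans haG, htF⟩ htc.le
      exact htc.lt.not_ge this
    -- an atom outside F1 lies below every other coatom
    have below_coatoms : ∀ b, b ≤ G → rk b = 1 → ¬ b ≤ F1 →
        ∀ F ∈ C, F ≠ F1 → b ≤ F := by
      intro b hbG hbrk hbF1 F hFC hFne
      have hlb := aux_lb hcov hdiamond m b G hbG (by omega)
      have hsub : {x : L | b ≤ x ∧ x ⋖ G} ⊆ C \ {F1} := by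
        rintro x ⟨hbx, hxc⟩
        refine ⟨⟨hxc.le, by have := hcov _ _ hxc; omega⟩, ?_⟩
        simp only [Set.mem_singleton_iff]
        rintro rfl
        exact hbF1 hbx
      have hdiffcard : (C \ {F1}).ncard + 1 = C.ncard :=
        Set.ncard_diff_singleton_add_one hF1 (Set.toFinite _)
      have heq := Set.eq_of_subset_of_ncard_le hsub (by omega) (Set.toFinite _)
      have hFmem : F ∈ {x : L | b ≤ x ∧ x ⋖ G} := by
        rw [heq]; exact ⟨hFC, hFne⟩
      exact hFmem.1
    have hdiffcard : (C \ {F1}).ncard + 1 = C.ncard :=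
      Set.ncard_diff_singleton_add_one hF1 (Set.toFinite _)
    -- uniqueness of the atom outside F1
    have atom_unique : ∀ b, b ≤ G → rk b = 1 → ¬ b ≤ F1 → b = a := by
      intro b hbG hbrk hbF1
      by_contra hba
      obtain ⟨F2, hF2⟩ : (C \ {F1}).Nonempty :=
        (Set.ncard_pos (Set.toFinite _)).1 (by omega)
      have hF2C : F2 ∈ C := hF2.1
      have hF2ne : F2 ≠ F1 := hF2.2
      have haF2 : a ≤ F2 := below_coatoms a haG harank hanF1 F2 hF2C hF2ne
      have hbF2 : b ≤ F2 := below_coatoms b hbG hbrk hbF1 F2 hF2C hF2ne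
      obtain ⟨e2⟩ := eIso F2 hF2C
      have hcardA : (e2 ⟨a, haF2⟩).card = 1 := by
        have := aux_rk_card hcov hrk0 e2 (e2 ⟨a, haF2⟩).card a haF2 rfl
        omega
      obtain ⟨i, hi⟩ := Finset.card_eq_one.1 hcardA
      have hcardB : (e2 ⟨b, hbF2⟩).card = 1 := by
        have := aux_rk_card hcov hrk0 e2 (e2 ⟨b, hbF2⟩).card b hbF2 rfl
        omega
      obtain ⟨j, hj⟩ := Finset.card_eq_one.1 hcardB
      have hij : i ≠ j := by
        rintro rfl
        apply hba
        have heq : (⟨b, hbF2⟩ : Set.Iic F2) = ⟨a, haF2⟩ :=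
          e2.injective (by rw [hi, hj])
        exact congrArg Subtype.val heq
      have hwF2 : ((e2.symm ({j}ᶜ) : Set.Iic F2) : L) ≤ F2 := (e2.symm ({j}ᶜ)).2
      set w := ((e2.symm ({j}ᶜ) : Set.Iic F2) : L) with hwdef
      have hew : e2 ⟨w, hwF2⟩ = {j}ᶜ := by
        have hsub : (⟨w, hwF2⟩ : Set.Iic F2) = e2.symm ({j}ᶜ) := Subtype.ext rfl
        rw [hsub, e2.apply_symm_apply]
      have hwrk : rk w = m - 1 := by
        have hcardc : ({j}ᶜ : Finset (Fin m)).card = m - 1 := by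
          rw [Finset.card_compl]; simp
        exact aux_rk_card hcov hrk0 e2 (m - 1) w hwF2 (by rw [hew, hcardc])
      have haw : a ≤ w := by
        have h1 : e2 ⟨a, haF2⟩ ≤ e2 ⟨w, hwF2⟩ := by
          rw [hi, hew]
          simp [Finset.singleton_subset_iff, Finset.mem_compl, hij, hij.symm]
        exact Subtype.coe_le_coe.2 (e2.le_iff_le.1 h1)
      have hbw : ¬ b ≤ w := by
        intro hbw
        have h1 := e2.le_iff_le.2 (show (⟨b, hbF2⟩ : Set.Iic F2) ≤ ⟨w, hwF2⟩ from hbw)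
        rw [hj, hew] at h1
        have := h1 (Finset.mem_singleton_self j)
        simp at this
      obtain ⟨u, v, huv, ⟨hu1, hu2⟩, ⟨hv1, hv2⟩, hall⟩ :=
        aux_middles hcov hdiamond (hwF2.trans hF2C.1) (by rw [hG, hwrk]; omega)
      have hwltF2 : w < F2 := lt_of_le_of_ne hwF2
        (fun e => by rw [e, hF2C.2] at hwrk; omega)
      have hF2uv : F2 = u ∨ F2 = v := by
        rcases hall F2 hwF2 hF2C.1 with h | h | h | h
        · exact absurd h.symm hwltF2.ne
        · exfalso; have h2 := hF2C.2; rw [h, hG] at h2; omega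
        · exact Or.inl h
        · exact Or.inr h
      obtain ⟨F', hF'ne, hwF', hF'G⟩ : ∃ F', F' ≠ F2 ∧ w ⋖ F' ∧ F' ⋖ G := by
        rcases hF2uv with rfl | rfl
        · exact ⟨v, fun h => huv h.symm, hv1, hv2⟩
        · exact ⟨u, huv, hu1, hu2⟩
      have hF'C : F' ∈ C := ⟨hF'G.le, by have := hcov _ _ hF'G; omega⟩
      rcases eq_or_ne F' F1 with rfl | hne1
      · exact hanF1 (haw.trans hwF'.le)
      · have hbF' : b ≤ F' := below_coatoms b hbG hbrk hbF1 F' hF'C hne1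
        have hbi : b ≤ F' ⊓ F2 := le_inf hbF' hbF2
        have hlt : F' ⊓ F2 < F2 := by
          refine lt_of_le_of_ne inf_le_right (fun e => hF'ne ?_)
          have h2 : F2 ≤ F' := e.symm.le.trans inf_le_left
          exact (aux_eq_of_rk hcov h2 (by rw [hF'C.2, hF2C.2])).symm
        have hwcovF2 : w ⋖ F2 := aux_cov_of_rk hcov hwF2
          (by rw [hF2C.2, hwrk]; omega)
        have heqw : F' ⊓ F2 = w := by
          by_contra hne'
          exact hwcovF2.2 (lt_of_le_of_ne (le_inf hwF'.le hwF2) (Ne.symm hne')) hlt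
        exact hbw (heqw ▸ hbi)
    -- the key structure theorem: everything outside F1 sits above a
    have star : ∀ c x, x ≤ G → ¬ x ≤ F1 → rk x = c →
        a ≤ x ∧ rk (x ⊓ F1) + 1 = c ∧ (x ⊓ F1) ⊔ a = x := by
      intro c
      induction c using Nat.strong_induction_on with
      | _ c ihc =>
        intro x hxG hxF1 hrkx
        rcases Nat.lt_or_ge c 2 with hc2 | hc2
        · rcases Nat.lt_or_ge c 1 with hc1 | hc1
          · exfalso
            have hxbot : x = ⊥ := by
              by_contra hb
              have := aux_rk_lt hcov (bot_lt_iff_ne_bot.2 hb)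
              rw [hrk0] at this; omega
            exact hxF1 (hxbot ▸ bot_le)
          · have hx_a : x = a := atom_unique x hxG (by omega) hxF1
            subst hx_a
            have h1 : x ⊓ F1 < x := lt_of_le_of_ne inf_le_left
              (fun e => hxF1 (e.symm.le.trans inf_le_right))
            have h2 := aux_rk_lt hcov h1
            have h3 : x ⊓ F1 = ⊥ := by
              by_contra hb
              have := aux_rk_lt hcov (bot_lt_iff_ne_bot.2 hb)
              rw [hrk0] at this; omega
            exact ⟨le_rfl, by rw [h3, hrk0]; omega, by rw [h3, bot_sup_eq]⟩
        · have hlb := aux_lb hcov hdiamond c ⊥ x bot_le (by rw [hrk0]; omega)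
          obtain ⟨t1, ht1, t2, ht2, hne12⟩ :=
            (Set.one_lt_ncard (s := {y : L | ⊥ ≤ y ∧ y ⋖ x}) (Set.toFinite _)).1
              (by omega)
          have key : ∀ t, t ⋖ x → t ≤ F1 → t = x ⊓ F1 := by
            intro t htc htF
            have h2 : x ⊓ F1 < x := lt_of_le_of_ne inf_le_left
              (fun e => hxF1 (e.symm.le.trans inf_le_right))
            by_contra hne'
            exact htc.2 (lt_of_le_of_ne (le_inf htc.le htF) hne') h2
          obtain ⟨u0, hu0c, hu0F⟩ : ∃ t, t ⋖ x ∧ ¬ t ≤ F1 := by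
            by_contra hno; push_neg at hno
            rw [key t1 ht1.2 (hno t1 ht1.2), key t2 ht2.2 (hno t2 ht2.2)] at hne12
            exact hne12 rfl
          have hu0rk : rk u0 = c - 1 := by have := hcov _ _ hu0c; omega
          obtain ⟨hau0, hru0, hju0⟩ :=
            ihc (c - 1) (by omega) u0 (hu0c.le.trans hxG) hu0F hu0rk
          have hpx : u0 ⊓ F1 ≤ x := inf_le_left.trans hu0c.le
          have hprk : rk (u0 ⊓ F1) = c - 2 := by omega
          obtain ⟨u, v, huv, ⟨hu1, hu2⟩, ⟨hv1, hv2⟩, hall⟩ :=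
            aux_middles hcov hdiamond hpx (by omega)
          have hpltu0 : u0 ⊓ F1 < u0 := lt_of_le_of_ne inf_le_left
            (fun e => hu0F (e.symm.le.trans inf_le_right))
          have hu0mid : u0 = u ∨ u0 = v := by
            rcases hall u0 inf_le_left hu0c.le with h | h | h | h
            · exact absurd h hpltu0.ne'
            · exact absurd h hu0c.lt.ne
            · exact Or.inl h
            · exact Or.inr h
          obtain ⟨v', hv'ne, hpv', hv'x, hall2⟩ : ∃ v', v' ≠ u0 ∧
              (u0 ⊓ F1) ⋖ v' ∧ v' ⋖ x ∧
              ∀ t, u0 ⊓ F1 ≤ t → t ≤ x → t = u0 ⊓ F1 ∨ t = x ∨ t = u0 ∨ t = v' := by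
            rcases hu0mid with rfl | rfl
            · exact ⟨v, fun h => huv h.symm, hv1, hv2, hall⟩
            · exact ⟨u, huv, hu1, hu2,
                fun t h1 h2 => by have := hall t h1 h2; tauto⟩
          have hv'rk : rk v' = c - 1 := by have := hcov _ _ hpv'; omega
          have hinfle : u0 ⊓ F1 ≤ x ⊓ F1 := le_inf hpx inf_le_right
          rcases hall2 (x ⊓ F1) hinfle inf_le_left with h | h | h | h
          · exfalso
            have hv'F1 : ¬ v' ≤ F1 := by
              intro hle
              have h1 : v' ≤ u0 ⊓ F1 := h ▸ le_inf hv'x.le hle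
              have := aux_rk_le hcov h1; omega
            obtain ⟨hav', hrv', hjv'⟩ :=
              ihc (c - 1) (by omega) v' (hv'x.le.trans hxG) hv'F1 hv'rk
            have hveq : v' ⊓ F1 = u0 ⊓ F1 := by
              apply le_antisymm
              · exact (le_inf (inf_le_left.trans hv'x.le) inf_le_right).trans h.le
              · exact le_inf hpv'.le inf_le_right
            have : v' = u0 := by rw [← hju0, ← hjv', hveq]
            exact hv'ne this
          · exact absurd (h.symm.le.trans inf_le_right) hxF1
          · exact absurd (h.symm.le.trans inf_le_right) hu0F
          · have hxjoin : u0 ⊔ v' = x := by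
              have h2 : u0 ⊔ v' ≤ x := sup_le hu0c.le hv'x.le
              rcases eq_or_lt_of_le (le_sup_left : u0 ≤ u0 ⊔ v') with he | hlt'
              · exfalso
                have hle : v' ≤ u0 := le_sup_right.trans he.symm.le
                exact hv'ne (aux_eq_of_rk hcov hle (by omega))
              · by_contra hne'
                exact hu0c.2 hlt' (lt_of_le_of_ne h2 hne')
            refine ⟨hau0.trans hu0c.le, by rw [h, hv'rk]; omega, ?_⟩
            have hstep : v' ⊔ a = v' ⊔ u0 := by
              rw [← hju0, ← sup_assoc, sup_eq_left.2 hpv'.le]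
            rw [h, hstep, sup_comm, hxjoin]
    have star1 : ∀ x, x ≤ G → ¬ a ≤ x → x ≤ F1 := by
      intro x hxG hax
      by_contra h
      exact hax (star (rk x) x hxG h rfl).1
    have join_lemma : ∀ y, y ≤ F1 → (y ⊔ a) ⊓ F1 = y ∧ rk (y ⊔ a) = rk y + 1 := by
      intro y hyF1
      have hsG : y ⊔ a ≤ G := sup_le (hyF1.trans hF1G) haG
      have hsnF1 : ¬ y ⊔ a ≤ F1 := fun h => hanF1 (le_sup_right.trans h)
      obtain ⟨has, hrs, hjs⟩ := star (rk (y ⊔ a)) (y ⊔ a) hsG hsnF1 rfl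
      have hyz : y ≤ (y ⊔ a) ⊓ F1 := le_inf le_sup_left hyF1
      have hzy : (y ⊔ a) ⊓ F1 = y := by
        by_contra hne
        obtain ⟨w, hyw, hwz⟩ := aux_exists_max (lt_of_le_of_ne hyz (Ne.symm hne))
        have hws : w ⊔ a = y ⊔ a := by
          apply le_antisymm
          · exact sup_le (hwz.le.trans inf_le_left) le_sup_right
          · exact sup_le (hyw.trans le_sup_left) le_sup_right
        have hwrk : rk w + 1 = rk ((y ⊔ a) ⊓ F1) := (hcov _ _ hwz).symm
        obtain ⟨u, v, huv, ⟨hu1, hu2⟩, ⟨hv1, hv2⟩, hall⟩ :=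
          aux_middles hcov hdiamond
            (show w ≤ y ⊔ a from hwz.le.trans inf_le_left) (by omega)
        have hznots : (y ⊔ a) ⊓ F1 ≠ y ⊔ a :=
          fun e => hsnF1 (e.symm.le.trans inf_le_right)
        have hzmid : (y ⊔ a) ⊓ F1 = u ∨ (y ⊔ a) ⊓ F1 = v := by
          rcases hall ((y ⊔ a) ⊓ F1) hwz.le inf_le_left with h | h | h | h
          · exact absurd h.symm hwz.lt.ne
          · exact absurd h hznots
          · exact Or.inl h
          · exact Or.inr h
        obtain ⟨v', hv'ne, hwv', hv's⟩ : ∃ v', v' ≠ (y ⊔ a) ⊓ F1 ∧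
            w ⋖ v' ∧ v' ⋖ (y ⊔ a) := by
          rcases hzmid with h | h
          · exact ⟨v, fun e => huv (h ▸ e).symm, hv1, hv2⟩
          · exact ⟨u, fun e => huv (e.trans h), hu1, hu2⟩
        have hv'F1 : ¬ v' ≤ F1 := by
          intro hle
          have h1 : v' ≤ (y ⊔ a) ⊓ F1 := le_inf hv's.le hle
          refine hv'ne (aux_eq_of_rk hcov h1 ?_)
          have := hcov _ _ hwv'; omega
        have hav' := (star (rk v') v' (hv's.le.trans hsG) hv'F1 rfl).1
        have hcontra : y ⊔ a ≤ v' := by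
          rw [← hws]; exact sup_le hwv'.le hav'
        exact hv's.lt.not_ge hcontra
      exact ⟨hzy, by rw [hzy] at hrs; omega⟩
    obtain ⟨e1⟩ := eIso F1 hF1
    classical
    refine ⟨OrderIso.trans ?_ (OrderIso.trans
      { toEquiv := e1.toEquiv.prodCongr (Equiv.refl Bool),
        map_rel_iff' := by
          rintro ⟨x1, b1⟩ ⟨x2, b2⟩
          simp [Prod.le_def, e1.le_iff_le] } (boolIso m))⟩
    refine
      { toFun := fun x => (⟨(x : L) ⊓ F1, inf_le_right⟩,
          if a ≤ (x : L) then true else false)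
        invFun := fun p => if p.2 then ⟨(p.1 : L) ⊔ a, sup_le (p.1.2.trans hF1G) haG⟩
          else ⟨(p.1 : L), p.1.2.trans hF1G⟩
        left_inv := ?_
        right_inv := ?_
        map_rel_iff' := ?_ }
    · intro x
      by_cases hax : a ≤ (x : L)
      · have hxnF1 : ¬ (x : L) ≤ F1 := fun h => hanF1 (hax.trans h)
        obtain ⟨-, -, hj⟩ := star (rk (x : L)) (x : L) x.2 hxnF1 rfl
        simp only [if_pos hax, if_true]
        exact Subtype.ext hj
      · have hxF1 : (x : L) ≤ F1 := star1 (x : L) x.2 hax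
        simp only [if_neg hax]
        exact Subtype.ext (inf_eq_left.2 hxF1)
    · rintro ⟨y, b⟩
      cases b
      · have hay : ¬ a ≤ (y : L) := fun h => hanF1 (h.trans y.2)
        simp only []
        refine Prod.ext (Subtype.ext ?_) ?_
        · exact inf_eq_left.2 y.2
        · simp [hay]
      · obtain ⟨h1, -⟩ := join_lemma (y : L) y.2
        simp only []
        refine Prod.ext (Subtype.ext ?_) ?_
        · exact h1
        · simp [le_sup_right]
    · intro x y
      constructor
      · rintro ⟨h1, h2⟩
        have h1' : (x : L) ⊓ F1 ≤ (y : L) ⊓ F1 := h1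
        show (x : L) ≤ (y : L)
        by_cases hax : a ≤ (x : L)
        · have hay : a ≤ (y : L) := by
            by_cases hay : a ≤ (y : L)
            · exact hay
            · simp only [Equiv.coe_fn_mk] at h2
              rw [if_pos hax, if_neg hay] at h2
              exact absurd h2 (by decide)
          have hxnF1 : ¬ (x : L) ≤ F1 := fun h => hanF1 (hax.trans h)
          obtain ⟨-, -, hj⟩ := star (rk (x : L)) (x : L) x.2 hxnF1 rfl
          rw [← hj]
          exact sup_le (h1'.trans inf_le_left) hay
        · have hxF1 : (x : L) ≤ F1 := star1 (x : L) x.2 hax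
          calc (x : L) = (x : L) ⊓ F1 := (inf_eq_left.2 hxF1).symm
            _ ≤ (y : L) ⊓ F1 := h1'
            _ ≤ (y : L) := inf_le_left
      · intro h
        have h' : (x : L) ≤ (y : L) := h
        refine ⟨?_, ?_⟩
        · show (x : L) ⊓ F1 ≤ (y : L) ⊓ F1
          exact inf_le_inf_right F1 h'
        · simp only [Equiv.coe_fn_mk]
          by_cases hax : a ≤ (x : L)
          · rw [if_pos hax, if_pos (hax.trans h')]
          · rw [if_neg hax]; exact Bool.false_le _

end Main

/-- Xue's Proposition 3.3, lattice form: if `G` is an element of a diamond lattice such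
that the interval `[⊥, G]` has rank `d+1` and exactly `d+1` coatoms (elements of rank `d`
below `G`), then `[⊥, G]` is isomorphic to the Boolean lattice `B_{d+1}`. -/
theorem stmt_11 {L : Type*} [Lattice L] [BoundedOrder L] [Fintype L]
    (d : ℕ) (rk : L → ℕ) (hrk0 : rk ⊥ = 0)
    (hcov : ∀ a b : L, a ⋖ b → rk b = rk a + 1)
    (hdiamond : ∀ a b : L, a ≤ b → rk b = rk a + 2 → (Set.Icc a b).ncard = 4)
    (G : L) (hG : rk G = d + 1)
    (hcoatoms : {x : L | x ≤ G ∧ rk x = d}.ncard = d + 1) :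
    Nonempty ((Set.Iic G) ≃o Finset (Fin (d + 1))) := by
  exact aux_main rk hrk0 hcov hdiamond (d + 1) G hG
    (by simpa using hcoatoms)
end
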